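/- Let M be an n×n matrix over 𝔽₂ with zero diagonal, p, p' distinct standard basis vectors with ⟨Mp, p'⟩ = ⟨Mp', p⟩ = 0, and A ∈ 𝔽₂ⁿ with ⟨Mx, Mᵀy⟩ = ⟨Mx, y⟩(1 + ⟨A, x + y⟩) for all standard basis vectors x, y, and ⟨A, p'⟩ = 0. Then for every standard basis vector u ≠ p', setting Pᵀ(u) = ⟨Mᵀu, p⟩((Mᵀp + p') + ⟨u, Mᵀp⟩u), we have ⟨Mp, Mᵀu + Pᵀ(u)⟩ = ⟨Mp, u⟩·(1 + ⟨A + S(M)p + ⟨A, p⟩p', p' + u⟩). -/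
import Mathlib


open Matrix

/-- Standard basis vector over the field with two elements. -/
def e {n : ℕ} (i : Fin n) : Fin n → ZMod 2 := Pi.single i 1

/-- `SM M` is the matrix with `⟨SM M x, y⟩ = ⟨M x, y⟩ * ⟨M y, x⟩` on standard basis vectors. -/
def SM {n : ℕ} (M : Matrix (Fin n) (Fin n) (ZMod 2)) : Matrix (Fin n) (Fin n) (ZMod 2) :=
  Matrix.of fun i j => (M.mulVec (e j) ⬝ᵥ e i) * (M.mulVec (e i) ⬝ᵥ e j)

/-- `P M p p' u = ⟨M u, p⟩ • ((M p + p') + ⟨u, M p⟩ • u)` on standard basis vectors. -/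
def P {n : ℕ} (M : Matrix (Fin n) (Fin n) (ZMod 2)) (p p' u : Fin n) : Fin n → ZMod 2 :=
  (M.mulVec (e u) ⬝ᵥ e p) • ((M.mulVec (e p) + e p') + (e u ⬝ᵥ M.mulVec (e p)) • e u)

/-- `PT M p p' u` is `P` formed with the transpose of `M`. -/
def PT {n : ℕ} (M : Matrix (Fin n) (Fin n) (ZMod 2)) (p p' u : Fin n) : Fin n → ZMod 2 :=
  (Mᵀ.mulVec (e u) ⬝ᵥ e p) • ((Mᵀ.mulVec (e p) + e p') + (e u ⬝ᵥ Mᵀ.mulVec (e p)) • e u)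

lemma mv_e {n : ℕ} (M : Matrix (Fin n) (Fin n) (ZMod 2)) (x y : Fin n) :
    M.mulVec (e x) ⬝ᵥ e y = M y x := by
  simp [e, Matrix.mulVec_single, dotProduct_single]

lemma dot_e {n : ℕ} (v : Fin n → ZMod 2) (y : Fin n) : v ⬝ᵥ e y = v y := by
  simp [e, dotProduct_single]

lemma e_dot {n : ℕ} (v : Fin n → ZMod 2) (y : Fin n) : e y ⬝ᵥ v = v y := by
  simp [e, single_dotProduct]

lemma mve_apply {n : ℕ} (M : Matrix (Fin n) (Fin n) (ZMod 2)) (x y : Fin n) :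
    (M.mulVec (e x)) y = M y x := by
  simp [e, Matrix.mulVec_single]

lemma SM_e {n : ℕ} (M : Matrix (Fin n) (Fin n) (ZMod 2)) (p j : Fin n) :
    (SM M).mulVec (e p) ⬝ᵥ e j = M j p * M p j := by
  rw [mv_e]
  simp [SM, mv_e]

theorem stmt_8 {n : ℕ} (M : Matrix (Fin n) (Fin n) (ZMod 2))
    (hdiag : ∀ q : Fin n, M.mulVec (e q) ⬝ᵥ e q = 0)
    (p p' : Fin n) (hpp' : p ≠ p')
    (h1 : M.mulVec (e p) ⬝ᵥ e p' = 0) (h2 : M.mulVec (e p') ⬝ᵥ e p = 0)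
    (A : Fin n → ZMod 2)
    (hA : ∀ x y : Fin n, M.mulVec (e x) ⬝ᵥ Mᵀ.mulVec (e y) =
      (M.mulVec (e x) ⬝ᵥ e y) * (1 + A ⬝ᵥ (e x + e y)))
    (hAp' : A ⬝ᵥ e p' = 0) :
    ∀ u : Fin n, u ≠ p' →
      M.mulVec (e p) ⬝ᵥ (Mᵀ.mulVec (e u) + PT M p p' u) =
        (M.mulVec (e p) ⬝ᵥ e u) *
          (1 + (A + (SM M).mulVec (e p) + (A ⬝ᵥ e p) • e p') ⬝ᵥ (e p' + e u)) := by
  intro u hu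
  have hpu := hA p u
  have hpp := hA p p
  have hd := hdiag p
  have hsq : ∀ a : ZMod 2, a * a = a := by decide
  have hepu : (e p' : Fin n → ZMod 2) u = 0 := by
    unfold e
    rw [Pi.single_apply]
    simp [hu]
  -- rewrite everything to matrix entries
  simp only [PT, dotProduct_add, dotProduct_smul, smul_eq_mul, add_dotProduct,
    smul_dotProduct, mv_e, dot_e, e_dot, SM_e]
  rw [hpu, hpp]
  simp only [mv_e, dot_e, e_dot, SM_e, dotProduct_add, Pi.add_apply, Pi.smul_apply,
    smul_eq_mul] at *
  have hepp : (e p' : Fin n → ZMod 2) p' = 1 := by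
    unfold e; rw [Pi.single_apply]; simp
  have hSM : ∀ j : Fin n, ((SM M).mulVec (e p)) j = M j p * M p j := by
    intro j
    rw [mve_apply]
    simp [SM, mv_e]
  simp only [mve_apply, transpose_apply, hSM] at *
  rw [hd, h1, hAp', hepu, hepp]
  ring_nf
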